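/- (Absolute value mutual information bound) Let T be a finite set, {X_t} satisfy log E[e^{±λX_t}] ≤ ψ(λ) for all λ ≥ 0 and t ∈ T with ψ convex, ψ(0)=ψ'(0)=0, and let W be a T-valued random variable. Then E[|X_W|] ≤ (ψ*)^{-1}(I(W; X_T) + log 2). -/

import Mathlib

open MeasureTheory ProbabilityTheory Real

/-- Legendre dual on `λ ≥ 0`, valued in `EReal`. -/
noncomputable def legendre (ψ : ℝ → ℝ) (x : ℝ) : EReal :=
  ⨆ l : {l : ℝ // 0 ≤ l}, (((l : ℝ) * x - ψ l : ℝ) : EReal)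

/-- Inverse of the Legendre dual on `[0,∞)`. -/
noncomputable def legendreInv (ψ : ℝ → ℝ) (y : ℝ) : ℝ :=
  sInf {x : ℝ | 0 ≤ x ∧ (y : EReal) ≤ legendre ψ x}

/-- Mutual information (in nats) between `W` and `Y`: KL divergence between the joint law
and the product of marginals. -/
noncomputable def mutualInfoReal {Ω T E : Type*} [MeasurableSpace Ω] [MeasurableSpace T]
    [MeasurableSpace E] (μ : Measure Ω) (W : Ω → T) (Y : Ω → E) : ℝ :=
  ∫ p, Real.log ((Measure.rnDeriv (μ.map (fun ω => (W ω, Y ω)))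
      ((μ.map W).prod (μ.map Y))) p).toReal ∂(μ.map (fun ω => (W ω, Y ω)))
open scoped ENNReal NNReal Topology

section GeneralKL


variable {α : Type*} [MeasurableSpace α] (P Q : Measure α)

lemma aux_mul_inv_le_one (a : ℝ≥0∞) : a * a⁻¹ ≤ 1 := by
  rcases eq_or_ne a 0 with rfl | h0
  · simp
  rcases eq_or_ne a ∞ with rfl | htop
  · simp
  · rw [ENNReal.mul_inv_cancel h0 htop]

lemma aux_lintegral_rnDeriv_mul [IsFiniteMeasure P] [IsFiniteMeasure Q] (hPQ : P ≪ Q) {g : α → ℝ≥0∞}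
    (hg : Measurable g) :
    ∫⁻ x, g x ∂P = ∫⁻ x, P.rnDeriv Q x * g x ∂Q := by
  conv_lhs => rw [← Measure.withDensity_rnDeriv_eq P Q hPQ]
  exact lintegral_withDensity_eq_lintegral_mul Q (Measure.measurable_rnDeriv P Q) hg

lemma aux_llr_eq_sub (x : ℝ) : max x 0 - max (-x) 0 = x := by
  rcases le_total x 0 with h | h
  · rw [max_eq_right h, max_eq_left (by linarith)]; ring
  · rw [max_eq_left h, max_eq_right (by linarith)]; ring

lemma aux_integrable_llr_of_bddAbove [IsProbabilityMeasure P] [IsProbabilityMeasure Q]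
    (hPQ : P ≪ Q) (C : ℝ)
    (hneg : Integrable (fun x => max (- llr P Q x) 0) P)
    (hC : ∀ᵐ x ∂P, llr P Q x ≤ C) : Integrable (llr P Q) P := by
  have hpos : Integrable (fun x => max (llr P Q x) 0) P := by
    refine Integrable.mono' (integrable_const (max C 0))
      ((measurable_llr P Q).max measurable_const).aestronglyMeasurable ?_
    filter_upwards [hC] with x hx
    rw [Real.norm_eq_abs, abs_of_nonneg (le_max_right _ _)]
    exact max_le_max hx le_rfl
  have : llr P Q = fun x => max (llr P Q x) 0 - max (- llr P Q x) 0 := by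
    funext x; rw [aux_llr_eq_sub]
  rw [this]
  exact hpos.sub hneg

lemma aux_gibbs [IsProbabilityMeasure P] [IsProbabilityMeasure Q]
    (hPQ : P ≪ Q) (h : Integrable (llr P Q) P) : 0 ≤ ∫ x, llr P Q x ∂P := by
  set g : α → ℝ := fun x => ((P.rnDeriv Q x)⁻¹).toReal with hgdef
  have hgmeas : Measurable g := (Measure.measurable_rnDeriv P Q).inv.ennreal_toReal
  have hgnonneg : ∀ x, 0 ≤ g x := fun x => ENNReal.toReal_nonneg
  have hP : Q.withDensity (P.rnDeriv Q) = P := Measure.withDensity_rnDeriv_eq P Q hPQ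
  have hae_pos : ∀ᵐ x ∂P, 0 < P.rnDeriv Q x := Measure.rnDeriv_pos hPQ
  have hae_lt : ∀ᵐ x ∂P, P.rnDeriv Q x < ∞ := hPQ.ae_le (Measure.rnDeriv_lt_top P Q)
  -- lintegral of (ρ)⁻¹ over P is at most 1
  have hlint : ∫⁻ x, ENNReal.ofReal (g x) ∂P ≤ 1 := by
    have h1 : ∫⁻ x, ENNReal.ofReal (g x) ∂P ≤ ∫⁻ x, (P.rnDeriv Q x)⁻¹ ∂P := by
      refine lintegral_mono fun x => ?_
      rw [hgdef]
      simp only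
      exact ENNReal.ofReal_toReal_le
    refine h1.trans ?_
    rw [aux_lintegral_rnDeriv_mul P Q hPQ (g := fun x => (P.rnDeriv Q x)⁻¹) (Measure.measurable_rnDeriv P Q).inv]
    calc ∫⁻ x, P.rnDeriv Q x * (P.rnDeriv Q x)⁻¹ ∂Q ≤ ∫⁻ _, 1 ∂Q :=
          lintegral_mono fun x => aux_mul_inv_le_one _
      _ = 1 := by simp
  have hg_int : Integrable g P := by
    refine ⟨hgmeas.aestronglyMeasurable, ?_⟩
    rw [hasFiniteIntegral_iff_ofReal (Filter.Eventually.of_forall hgnonneg)]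
    exact lt_of_le_of_lt hlint (by simp)
  have hg_integral : ∫ x, g x ∂P ≤ 1 := by
    rw [integral_eq_lintegral_of_nonneg_ae (Filter.Eventually.of_forall hgnonneg)
      hgmeas.aestronglyMeasurable]
    calc (∫⁻ x, ENNReal.ofReal (g x) ∂P).toReal ≤ (1 : ℝ≥0∞).toReal :=
          ENNReal.toReal_mono (by simp) hlint
      _ = 1 := by simp
  -- pointwise: -llr ≤ g - 1
  have hptwise : ∀ᵐ x ∂P, - llr P Q x ≤ g x - 1 := by
    filter_upwards [hae_pos, hae_lt] with x hx0 hxlt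
    have hr0 : 0 < (P.rnDeriv Q x).toReal := ENNReal.toReal_pos hx0.ne' hxlt.ne
    have hgx : g x = ((P.rnDeriv Q x).toReal)⁻¹ := by
      rw [hgdef]; simp only [ENNReal.toReal_inv]
    have : - llr P Q x = log (g x) := by
      rw [hgx, Real.log_inv, llr]
    rw [this]
    exact Real.log_le_sub_one_of_pos (by rw [hgx]; positivity)
  have : ∫ x, - llr P Q x ∂P ≤ ∫ x, (g x - 1) ∂P :=
    integral_mono_ae h.neg (hg_int.sub (integrable_const 1)) hptwise
  rw [integral_neg] at this
  rw [integral_sub hg_int (integrable_const 1)] at this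
  simp only [integral_const, measure_univ, probReal_univ, ENNReal.toReal_one, smul_eq_mul, one_mul] at this
  linarith

lemma aux_dv [IsProbabilityMeasure P] [IsProbabilityMeasure Q]
    (hPQ : P ≪ Q) (f : α → ℝ) (hfP : Integrable f P)
    (hfQ : Integrable (fun x => exp (f x)) Q) (hllr : Integrable (llr P Q) P) :
    ∫ x, f x ∂P ≤ ∫ x, llr P Q x ∂P + log (∫ x, exp (f x) ∂Q) := by
  have : NeZero Q := ⟨IsProbabilityMeasure.ne_zero Q⟩
  have hQ' : IsProbabilityMeasure (Q.tilted f) := isProbabilityMeasure_tilted hfQ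
  have hPQ' : P ≪ Q.tilted f := hPQ.trans (absolutelyContinuous_tilted hfQ)
  have h' : Integrable (llr P (Q.tilted f)) P :=
    integrable_llr_tilted_right hPQ hfP hllr hfQ
  have hnonneg : 0 ≤ ∫ x, llr P (Q.tilted f) x ∂P := aux_gibbs _ _ hPQ' h'
  have heq : ∫ x, llr P (Q.tilted f) x ∂P
      = ∫ x, llr P Q x ∂P - ∫ x, f x ∂P + log (∫ x, exp (f x) ∂Q) :=
    integral_llr_tilted_right hPQ hfP hfQ hllr
  rw [heq] at hnonneg
  linarith


lemma aux_integrable_neg_part_llr [IsProbabilityMeasure P] [IsProbabilityMeasure Q]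
    (hPQ : P ≪ Q) : Integrable (fun x => max (- llr P Q x) 0) P := by
  have hmeas : Measurable (fun x => max (- llr P Q x) 0) :=
    (measurable_llr P Q).neg.max measurable_const
  refine ⟨hmeas.aestronglyMeasurable, ?_⟩
  refine (hasFiniteIntegral_iff_ofReal
    (Filter.Eventually.of_forall fun x => le_max_right _ _)).2 ?_
  have hP : Q.withDensity (P.rnDeriv Q) = P := Measure.withDensity_rnDeriv_eq P Q hPQ
  have hg : Measurable fun x => ENNReal.ofReal (max (- llr P Q x) 0) :=
    hmeas.ennreal_ofReal
  set g : α → ℝ≥0∞ := fun x => ENNReal.ofReal (max (- llr P Q x) 0) with hgdef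
  calc ∫⁻ x, g x ∂P
      = ∫⁻ x, P.rnDeriv Q x * g x ∂Q := by
        conv_lhs => rw [← hP]
        rw [lintegral_withDensity_eq_lintegral_mul Q (Measure.measurable_rnDeriv P Q) hg]
        rfl
    _ ≤ ∫⁻ _, 1 ∂Q := by
        refine lintegral_mono_ae ?_
        filter_upwards [Measure.rnDeriv_lt_top P Q] with x hx
        rw [hgdef]
        simp only
        set r := (P.rnDeriv Q x).toReal with hr
        have hr0 : 0 ≤ r := ENNReal.toReal_nonneg
        have hρ : P.rnDeriv Q x = ENNReal.ofReal r := by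
          rw [hr, ENNReal.ofReal_toReal hx.ne]
        rw [hρ, ← ENNReal.ofReal_mul hr0]
        rw [show (1 : ℝ≥0∞) = ENNReal.ofReal 1 by simp]
        refine ENNReal.ofReal_le_ofReal ?_
        rcases le_or_gt r 0 with hr0' | hrpos
        · have : r = 0 := le_antisymm hr0' hr0
          simp [this]
        · rcases le_or_gt (- llr P Q x) 0 with hneg | hpos
          · rw [max_eq_right hneg]; simp
          · rw [max_eq_left hpos.le]
            have : - llr P Q x = log r⁻¹ := by
              rw [Real.log_inv]; rfl
            rw [this]
            have h1 : log r⁻¹ ≤ r⁻¹ - 1 := Real.log_le_sub_one_of_pos (by positivity)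
            have h2 : r * log r⁻¹ ≤ r * r⁻¹ := by
              nlinarith [Real.log_le_sub_one_of_pos (show (0:ℝ) < r⁻¹ by positivity)]
            calc r * log r⁻¹ ≤ r * r⁻¹ := h2
              _ = 1 := mul_inv_cancel₀ hrpos.ne'
    _ = 1 := by simp
    _ < ∞ := by simp

end GeneralKL

section Aux2
variable {α : Type*} [MeasurableSpace α] (P Q : Measure α)

lemma aux_llr_le_const [IsProbabilityMeasure P] [IsProbabilityMeasure Q] (hPQ : P ≪ Q)
    (C : ℝ≥0∞) (hC1 : 1 ≤ C) (hCtop : C ≠ ∞) (hle : ∀ s, MeasurableSet s → P s ≤ C * Q s) :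
    ∀ᵐ x ∂P, llr P Q x ≤ log C.toReal := by
  have hrn : P.rnDeriv Q ≤ᵐ[Q] fun _ => C := by
    refine ae_le_of_forall_setLIntegral_le_of_sigmaFinite₀
      (Measure.measurable_rnDeriv P Q).aemeasurable ?_
    intro s hs _
    rw [Measure.setLIntegral_rnDeriv hPQ s, setLIntegral_const]
    exact hle s hs
  have hC1' : (1 : ℝ) ≤ C.toReal := by
    rw [show (1:ℝ) = (1 : ℝ≥0∞).toReal by simp]
    exact ENNReal.toReal_mono hCtop hC1
  filter_upwards [hPQ.ae_le hrn] with x hx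
  rw [llr]
  rcases eq_or_lt_of_le (ENNReal.toReal_nonneg (a := P.rnDeriv Q x)) with h0 | hpos
  · rw [← h0, Real.log_zero]
    exact Real.log_nonneg hC1'
  · exact Real.log_le_log hpos (ENNReal.toReal_mono hCtop hx)

lemma aux_measurable_eval {T : Type*} [Fintype T] [MeasurableSpace T]
    [MeasurableSingletonClass T] :
    Measurable (fun p : T × (T → ℝ) => p.2 p.1) := by
  classical
  have heq : (fun p : T × (T → ℝ) => p.2 p.1)
      = fun p => ∑ t : T, if p.1 = t then p.2 t else 0 := by
    funext p
    rw [Finset.sum_ite_eq]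
    simp
  rw [heq]
  refine Finset.measurable_sum _ fun t _ => ?_
  refine Measurable.ite ?_ ((measurable_pi_apply t).comp measurable_snd) measurable_const
  exact (measurable_fst (measurableSet_singleton t) : _)

lemma aux_psi_nonneg (ψ : ℝ → ℝ) (hconv : ConvexOn ℝ (Set.Ici 0) ψ) (h0 : ψ 0 = 0)
    (hd : HasDerivWithinAt ψ 0 (Set.Ici 0) 0) : ∀ l : ℝ, 0 ≤ l → 0 ≤ ψ l := by
  intro l hl
  rcases eq_or_lt_of_le hl with rfl | hlpos
  · exact le_of_eq h0.symm
  by_contra hneg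
  push_neg at hneg
  have hkey : ∀ u : ℝ, 0 < u → u ≤ l → ψ u ≤ (u / l) * ψ l := by
    intro u hu hul
    have hb0 : (0:ℝ) ≤ u / l := by positivity
    have hb1 : u / l ≤ 1 := (div_le_one hlpos).2 hul
    have := hconv.2 (Set.mem_Ici.2 le_rfl) (Set.mem_Ici.2 hl)
      (by linarith : (0:ℝ) ≤ 1 - u / l) hb0 (by ring)
    have harg : (1 - u / l) • (0:ℝ) + (u / l) • l = u := by
      rw [smul_eq_mul, smul_eq_mul, mul_zero, zero_add, div_mul_cancel₀ u hlpos.ne']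
    rw [harg] at this
    calc ψ u ≤ (1 - u / l) * ψ 0 + (u / l) * ψ l := this
      _ = (u / l) * ψ l := by rw [h0]; ring
  have htend : Filter.Tendsto (slope ψ 0) (nhdsWithin 0 (Set.Ici 0 \ {0})) (nhds 0) :=
    hasDerivWithinAt_iff_tendsto_slope.1 hd
  have hIoi : Set.Ici (0:ℝ) \ {0} = Set.Ioi 0 := by
    ext u
    simp only [Set.mem_diff, Set.mem_Ici, Set.mem_singleton_iff, Set.mem_Ioi]
    constructor
    · rintro ⟨h1, h2⟩; exact lt_of_le_of_ne h1 (Ne.symm h2)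
    · intro h; exact ⟨h.le, h.ne'⟩
  rw [hIoi] at htend
  have hev : ∀ᶠ u in nhdsWithin 0 (Set.Ioi 0), slope ψ 0 u ≤ ψ l / l := by
    filter_upwards [Ioo_mem_nhdsGT_of_mem (Set.mem_Ico.2 ⟨le_rfl, hlpos⟩)] with u hu
    obtain ⟨hu0, hul⟩ := hu
    rw [slope_def_field]
    have := hkey u hu0 hul.le
    rw [h0, sub_zero, sub_zero]
    rw [div_le_div_iff₀ hu0 hlpos]
    calc ψ u * l ≤ ((u / l) * ψ l) * l := by nlinarith
      _ = ψ l * u := by field_simp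
  have : (0:ℝ) ≤ ψ l / l := le_of_tendsto htend hev
  have : ψ l / l < 0 := div_neg_of_neg_of_pos hneg hlpos
  linarith

lemma aux_le_legendreInv (ψ : ℝ → ℝ) (hψ : ∀ l : ℝ, 0 ≤ l → 0 ≤ ψ l)
    (A y : ℝ) (hA : 0 ≤ A) (hy : 0 < y)
    (hkey : ∀ l : ℝ, 0 ≤ l → l * A - ψ l ≤ y) : A ≤ legendreInv ψ y := by
  refine le_csInf ?_ ?_
  · refine ⟨max (y + ψ 1) 0, le_max_right _ _, ?_⟩
    refine le_trans ?_ (le_iSup _ (⟨1, zero_le_one⟩ : {l : ℝ // 0 ≤ l}))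
    rw [EReal.coe_le_coe_iff]
    show y ≤ 1 * max (y + ψ 1) 0 - ψ 1
    have := le_max_left (y + ψ 1) 0
    linarith
  · rintro x ⟨hx0, hxle⟩
    by_contra hAx
    push_neg at hAx
    have hApos : 0 < A := lt_of_le_of_lt hx0 hAx
    set t : ℝ := x / A with htdef
    have ht0 : 0 ≤ t := by positivity
    have ht1 : t < 1 := (div_lt_one hApos).2 hAx
    have htA : t * A = x := div_mul_cancel₀ x hApos.ne'
    have hsup : legendre ψ x ≤ ((t * y : ℝ) : EReal) := by
      refine iSup_le ?_
      rintro ⟨l, hl⟩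
      rw [EReal.coe_le_coe_iff]
      show l * x - ψ l ≤ t * y
      have h1 := hkey l hl
      have h2 := hψ l hl
      nlinarith [mul_le_mul_of_nonneg_left h1 ht0]
    have : (y : EReal) ≤ ((t * y : ℝ) : EReal) := le_trans hxle hsup
    rw [EReal.coe_le_coe_iff] at this
    nlinarith

end Aux2

/-- Absolute value mutual information bound: under the two-sided assumptions,
`E[|X_W|] ≤ (ψ*)⁻¹(I(W ; X_T) + log 2)`. -/
theorem abs_mutual_information_bound {Ω T : Type*} [MeasurableSpace Ω]
    (μ : Measure Ω) [IsProbabilityMeasure μ] [Fintype T] [Nonempty T]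
    [MeasurableSpace T] [MeasurableSingletonClass T]
    (X : T → Ω → ℝ) (hmeas : ∀ t, Measurable (X t))
    (ψ : ℝ → ℝ) (hconv : ConvexOn ℝ (Set.Ici 0) ψ) (h0 : ψ 0 = 0)
    (hd : HasDerivWithinAt ψ 0 (Set.Ici 0) 0)
    (h : ∀ t, ∀ l : ℝ, 0 ≤ l → Integrable (fun ω => Real.exp (l * X t ω)) μ ∧
      Real.log (∫ ω, Real.exp (l * X t ω) ∂μ) ≤ ψ l)
    (hneg : ∀ t, ∀ l : ℝ, 0 ≤ l → Integrable (fun ω => Real.exp (-l * X t ω)) μ ∧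
      Real.log (∫ ω, Real.exp (-l * X t ω) ∂μ) ≤ ψ l)
    (W : Ω → T) (hW : Measurable W) :
    (∫ ω, |X (W ω) ω| ∂μ) ≤
      legendreInv ψ (mutualInfoReal μ W (fun ω => fun t => X t ω) + Real.log 2) := by
  classical
  set Y : Ω → (T → ℝ) := fun ω t => X t ω with hYdef
  have hY : Measurable Y := measurable_pi_lambda _ fun t => hmeas t
  have hpair : Measurable fun ω => (W ω, Y ω) := hW.prodMk hY
  set κ : Measure T := μ.map W with hκdef
  set ν : Measure (T → ℝ) := μ.map Y with hνdef
  set P : Measure (T × (T → ℝ)) := μ.map (fun ω => (W ω, Y ω)) with hPdef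
  set Q : Measure (T × (T → ℝ)) := κ.prod ν with hQdef
  haveI : IsProbabilityMeasure κ := Measure.isProbabilityMeasure_map hW.aemeasurable
  haveI : IsProbabilityMeasure ν := Measure.isProbabilityMeasure_map hY.aemeasurable
  haveI : IsProbabilityMeasure P := Measure.isProbabilityMeasure_map hpair.aemeasurable
  -- decomposition of P over the fibers of W
  have hsub : ∀ s : Set (T × (T → ℝ)),
      (fun ω => (W ω, Y ω)) ⁻¹' s ⊆ ⋃ t : T, (W ⁻¹' {t} ∩ Y ⁻¹' (Prod.mk t ⁻¹' s)) := by
    intro s ω hω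
    exact Set.mem_iUnion.2 ⟨W ω, ⟨rfl, hω⟩⟩
  have hPle : ∀ s : Set (T × (T → ℝ)), MeasurableSet s →
      P s ≤ ∑ t : T, μ (W ⁻¹' {t} ∩ Y ⁻¹' (Prod.mk t ⁻¹' s)) := by
    intro s hs
    rw [hPdef, Measure.map_apply hpair hs]
    refine (measure_mono (hsub s)).trans ?_
    refine (measure_iUnion_le _).trans ?_
    rw [ENNReal.tsum_eq_iSup_sum]
    refine iSup_le fun F => Finset.sum_le_sum_of_subset (Finset.subset_univ F)
  have hQs : ∀ s : Set (T × (T → ℝ)), MeasurableSet s →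
      Q s = ∑ t : T, ν (Prod.mk t ⁻¹' s) * κ {t} := by
    intro s hs
    rw [hQdef, Measure.prod_apply hs, lintegral_fintype]
  have hWfib : ∀ t : T, μ (W ⁻¹' {t}) = κ {t} := by
    intro t
    rw [hκdef, Measure.map_apply hW (measurableSet_singleton t)]
  have hYfib : ∀ s : Set (T × (T → ℝ)), MeasurableSet s → ∀ t : T,
      μ (Y ⁻¹' (Prod.mk t ⁻¹' s)) = ν (Prod.mk t ⁻¹' s) := by
    intro s hs t
    rw [hνdef, Measure.map_apply hY (measurable_prodMk_left hs)]
  -- absolute continuity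
  have hac : P ≪ Q := by
    refine Measure.AbsolutelyContinuous.mk fun s hs hs0 => ?_
    rw [hQs s hs] at hs0
    have hterm : ∀ t : T, ν (Prod.mk t ⁻¹' s) * κ {t} = 0 :=
      fun t => (Finset.sum_eq_zero_iff.1 hs0) t (Finset.mem_univ t)
    refine le_antisymm ?_ zero_le
    refine (hPle s hs).trans ?_
    refine le_of_eq (Finset.sum_eq_zero fun t _ => ?_)
    rcases mul_eq_zero.1 (hterm t) with hν0 | hκ0
    · refine le_antisymm ?_ zero_le
      refine (measure_mono Set.inter_subset_right).trans ?_
      rw [hYfib s hs t, hν0]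
    · refine le_antisymm ?_ zero_le
      refine (measure_mono Set.inter_subset_left).trans ?_
      rw [hWfib t, hκ0]
  -- the domination constant
  set C : ℝ≥0∞ := ∑ t : T, (if κ {t} = 0 then 1 else (κ {t})⁻¹) with hCdef
  have hCtop : C ≠ ∞ := by
    rw [hCdef]
    refine (ENNReal.sum_lt_top.2 fun t _ => ?_).ne
    split_ifs with ht
    · simp
    · simp [ENNReal.inv_lt_top, pos_iff_ne_zero, ht]
  have hCsummand : ∀ t : T, (if κ {t} = 0 then 1 else (κ {t})⁻¹) ≤ C := by
    intro t
    rw [hCdef]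
    exact Finset.single_le_sum (f := fun t : T => if κ {t} = 0 then 1 else (κ {t})⁻¹)
      (fun t _ => zero_le) (Finset.mem_univ t)
  have hC1 : 1 ≤ C := by
    obtain t₀ : T := Classical.arbitrary T
    refine le_trans ?_ (hCsummand t₀)
    split_ifs with ht
    · exact le_rfl
    · rw [ENNReal.one_le_inv]  -- check name
      exact prob_le_one
  have hdom : ∀ s : Set (T × (T → ℝ)), MeasurableSet s → P s ≤ C * Q s := by
    intro s hs
    refine (hPle s hs).trans ?_
    rw [hQs s hs, Finset.mul_sum]
    refine Finset.sum_le_sum fun t _ => ?_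
    by_cases hκ0 : κ {t} = 0
    · refine le_trans ((measure_mono Set.inter_subset_left).trans ?_) zero_le
      rw [hWfib t, hκ0]
    · have h1 : μ (W ⁻¹' {t} ∩ Y ⁻¹' (Prod.mk t ⁻¹' s)) ≤ ν (Prod.mk t ⁻¹' s) := by
        refine (measure_mono Set.inter_subset_right).trans ?_
        rw [hYfib s hs t]
      refine h1.trans ?_
      have h2 : (κ {t})⁻¹ ≤ C := le_trans (by rw [if_neg hκ0]) (hCsummand t)
      calc ν (Prod.mk t ⁻¹' s) = ((κ {t})⁻¹ * κ {t}) * ν (Prod.mk t ⁻¹' s) := by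
            rw [ENNReal.inv_mul_cancel hκ0 (measure_ne_top κ _), one_mul]
        _ = (κ {t})⁻¹ * (ν (Prod.mk t ⁻¹' s) * κ {t}) := by ring
        _ ≤ C * (ν (Prod.mk t ⁻¹' s) * κ {t}) := mul_le_mul_left h2 _
  -- integrability of llr
  have hllr_int : Integrable (llr P Q) P :=
    aux_integrable_llr_of_bddAbove P Q hac (log C.toReal)
      (aux_integrable_neg_part_llr P Q hac)
      (aux_llr_le_const P Q hac C hC1 hCtop hdom)
  have hInonneg : 0 ≤ ∫ x, llr P Q x ∂P := aux_gibbs P Q hac hllr_int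
  -- integrability of |X t| and |X (W ω) ω|
  have habs_le : ∀ x : ℝ, |x| ≤ exp (1 * x) + exp (-1 * x) := by
    intro x
    rcases abs_cases x with ⟨he, _⟩ | ⟨he, _⟩ <;> rw [he] <;>
      nlinarith [Real.add_one_le_exp (1 * x), Real.add_one_le_exp (-1 * x),
        Real.exp_pos (1 * x), Real.exp_pos (-1 * x)]
  have habs_int : ∀ t, Integrable (fun ω => |X t ω|) μ := by
    intro t
    refine Integrable.mono' ((h t 1 zero_le_one).1.add (hneg t 1 zero_le_one).1)
      (hmeas t).abs.aestronglyMeasurable ?_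
    filter_upwards with ω
    rw [Real.norm_eq_abs, abs_abs]
    exact habs_le (X t ω)
  have hEval : Measurable (fun p : T × (T → ℝ) => p.2 p.1) := aux_measurable_eval
  have hXWmeas : Measurable fun ω => |X (W ω) ω| := (hEval.comp hpair).abs
  have hXW_int : Integrable (fun ω => |X (W ω) ω|) μ := by
    refine Integrable.mono' (integrable_finset_sum Finset.univ fun t _ => habs_int t)
      hXWmeas.aestronglyMeasurable ?_
    filter_upwards with ω
    rw [Real.norm_eq_abs, abs_abs]
    exact Finset.single_le_sum (f := fun t => |X t ω|) (fun t _ => abs_nonneg _)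
      (Finset.mem_univ (W ω))
  set A : ℝ := ∫ ω, |X (W ω) ω| ∂μ with hAdef
  have hA0 : 0 ≤ A := integral_nonneg fun ω => abs_nonneg _
  -- the key exponential-moment inequality
  have key : ∀ l : ℝ, 0 ≤ l → l * A ≤ (∫ x, llr P Q x ∂P) + log 2 + ψ l := by
    intro l hl
    set F : T × (T → ℝ) → ℝ := fun p => l * |p.2 p.1| with hFdef
    have hFmeas : Measurable F := (hEval.abs.const_mul l)
    have hFP : Integrable F P := by
      rw [hPdef, integrable_map_measure hFmeas.aestronglyMeasurable hpair.aemeasurable]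
      exact hXW_int.const_mul l
    have hslice_bound : ∀ x : ℝ, exp (l * |x|) ≤ exp (l * x) + exp (-l * x) := by
      intro x
      rcases abs_cases x with ⟨he, _⟩ | ⟨he, _⟩ <;> rw [he]
      · nlinarith [Real.exp_pos (-l * x)]
      · rw [show l * -x = -l * x by ring]
        nlinarith [Real.exp_pos (l * x)]
    have hslice_meas : ∀ t : T, Measurable fun y : T → ℝ => exp (l * |y t|) :=
      fun t => ((((measurable_pi_apply t : Measurable fun y : T → ℝ => y t)).abs.const_mul l).exp)
    have hexp_slice_mu : ∀ t, Integrable (fun ω => exp (l * |X t ω|)) μ := by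
      intro t
      refine Integrable.mono' ((h t l hl).1.add (hneg t l hl).1)
        ((((hmeas t).abs.const_mul l).exp).aestronglyMeasurable) ?_
      filter_upwards with ω
      rw [Real.norm_eq_abs, abs_of_pos (Real.exp_pos _)]
      exact hslice_bound (X t ω)
    have hexp_slice : ∀ t, Integrable (fun y : T → ℝ => exp (l * |y t|)) ν := by
      intro t
      rw [hνdef, integrable_map_measure (hslice_meas t).aestronglyMeasurable hY.aemeasurable]
      exact hexp_slice_mu t
    have hmom : ∀ t : T, ∫ ω, exp (l * X t ω) ∂μ ≤ exp (ψ l) := by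
      intro t
      rw [← Real.exp_log (integral_exp_pos (h t l hl).1)]
      exact Real.exp_le_exp.2 (h t l hl).2
    have hmomneg : ∀ t : T, ∫ ω, exp (-l * X t ω) ∂μ ≤ exp (ψ l) := by
      intro t
      rw [← Real.exp_log (integral_exp_pos (hneg t l hl).1)]
      exact Real.exp_le_exp.2 (hneg t l hl).2
    have hint_exp_le : ∀ t : T, ∫ y, exp (l * |y t|) ∂ν ≤ 2 * exp (ψ l) := by
      intro t
      have e1 : ∫ y, exp (l * |y t|) ∂ν = ∫ ω, exp (l * |X t ω|) ∂μ := by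
        rw [hνdef, integral_map hY.aemeasurable (hslice_meas t).aestronglyMeasurable]
      rw [e1]
      have e2 : ∫ ω, exp (l * |X t ω|) ∂μ
          ≤ ∫ ω, (exp (l * X t ω) + exp (-l * X t ω)) ∂μ := by
        refine integral_mono (hexp_slice_mu t) ((h t l hl).1.add (hneg t l hl).1) ?_
        intro ω
        exact hslice_bound (X t ω)
      refine e2.trans ?_
      rw [integral_add (h t l hl).1 (hneg t l hl).1]
      have := hmom t
      have := hmomneg t
      linarith
    have hFexpQ : Integrable (fun p => exp (F p)) Q := by
      rw [hQdef]
      refine (integrable_prod_iff (hFmeas.exp).aestronglyMeasurable).2 ⟨?_, ?_⟩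
      · exact Filter.Eventually.of_forall fun t => hexp_slice t
      · refine Integrable.mono' (integrable_const (2 * exp (ψ l)))
          (measurable_of_countable _).aestronglyMeasurable ?_
        filter_upwards with t
        have hnn : 0 ≤ ∫ y, ‖exp (F (t, y))‖ ∂ν := integral_nonneg fun y => norm_nonneg _
        rw [Real.norm_eq_abs, abs_of_nonneg hnn]
        have : ∀ y : T → ℝ, ‖exp (F (t, y))‖ = exp (l * |y t|) := by
          intro y
          rw [Real.norm_eq_abs, abs_of_pos (Real.exp_pos _)]
        rw [integral_congr_ae (Filter.Eventually.of_forall this)]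
        exact hint_exp_le t
    have hexpQ_le : ∫ p, exp (F p) ∂Q ≤ 2 * exp (ψ l) := by
      rw [hQdef, integral_prod _ hFexpQ]
      calc ∫ t, (∫ y, exp (F (t, y)) ∂ν) ∂κ ≤ ∫ _, (2 * exp (ψ l)) ∂κ := by
            refine integral_mono ?_ (integrable_const _) fun t => hint_exp_le t
            refine Integrable.mono' (integrable_const (2 * exp (ψ l)))
              (measurable_of_countable _).aestronglyMeasurable ?_
            filter_upwards with t
            have hnn : 0 ≤ ∫ y, exp (F (t, y)) ∂ν :=
              integral_nonneg fun y => (Real.exp_pos _).le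
            rw [Real.norm_eq_abs, abs_of_nonneg hnn]
            exact hint_exp_le t
        _ = 2 * exp (ψ l) := by simp
    have hFint_eq : ∫ p, F p ∂P = l * A := by
      rw [hPdef, integral_map hpair.aemeasurable hFmeas.aestronglyMeasurable, hAdef]
      rw [← integral_const_mul]
    have hdv := aux_dv P Q hac F hFP hFexpQ hllr_int
    rw [hFint_eq] at hdv
    have hlog : log (∫ p, exp (F p) ∂Q) ≤ log 2 + ψ l := by
      have hpos : 0 < ∫ p, exp (F p) ∂Q := integral_exp_pos hFexpQ
      calc log (∫ p, exp (F p) ∂Q) ≤ log (2 * exp (ψ l)) :=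
            Real.log_le_log hpos hexpQ_le
        _ = log 2 + ψ l := by rw [Real.log_mul two_ne_zero (Real.exp_ne_zero _), Real.log_exp]
    linarith
  -- conclusion
  have hIeq : mutualInfoReal μ W Y = ∫ x, llr P Q x ∂P := rfl
  rw [hIeq]
  refine aux_le_legendreInv ψ (aux_psi_nonneg ψ hconv h0 hd) A
    ((∫ x, llr P Q x ∂P) + log 2) hA0 ?_ ?_
  · have : (0:ℝ) < log 2 := Real.log_pos one_lt_two
    linarith
  · intro l hl
    have := key l hl
    linarith
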